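/- Let ξ_k be the unique positive root of Φ_k(x) = 1 and set P(x) = x²(Φ_k(x) − Φ_{k-1}(x))²(Φ_k(x) − x). Then P(ξ_k) = ξ_k²(1 − √(1 − ξ_k))²(1 − ξ_k), and as k → ∞ this quantity converges to p = (3/64)(1 − √3/2)², which satisfies p > 1/1200. -/

import Mathlib

open Filter Real

/-- `Φ_0(x) = x`, `Φ_k(x) = x + Φ_{k-1}(x)²`. -/
def Phi : ℕ → ℝ → ℝ
  | 0, x => x
  | k + 1, x => x + (Phi k x) ^ 2

/-- `P(x) = x²(Φ_k(x) − Φ_{k-1}(x))²(Φ_k(x) − x)` for `k ≥ 1` (written with index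
`k+1`). -/
def Pval (k : ℕ) (x : ℝ) : ℝ :=
  x ^ 2 * (Phi (k + 1) x - Phi k x) ^ 2 * (Phi (k + 1) x - x)

/-! Since `Φ_{k+1}(ξ) = ξ + Φ_k(ξ)² = 1`, the nonnegative number `Φ_k(ξ)` is `√(1 - ξ)`, which
gives the closed form of `P(ξ_{k+1})`. The roots `ξ_k` decrease (as `Φ_k ≤ Φ_{k+1}`) and stay
above `1/4` (as `Φ_k(1/4) ≤ 1/2`). At their limit `L` the increasing sequence `Φ_k(L)` is bounded
by `1`, so it converges to some `A = L + A²`, forcing `L = A - A² ≤ 1/4`. Hence `ξ_k → 1/4`, and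
continuity of the closed form gives the limit; `p > 1/1200` follows from `√3 < 26/15`. -/

lemma le_Phi (k : ℕ) (x : ℝ) : x ≤ Phi k x := by
  induction k with
  | zero => exact le_rfl
  | succ n _ => exact le_add_of_nonneg_right (sq_nonneg _)

lemma Phi_nonneg (k : ℕ) {x : ℝ} (hx : 0 ≤ x) : 0 ≤ Phi k x :=
  hx.trans (le_Phi k x)

lemma Phi_strictMonoOn (k : ℕ) : StrictMonoOn (Phi k) (Set.Ici 0) := by
  intro x hx y _ hxy
  induction k with
  | zero => exact hxy
  | succ n ih =>
    have := pow_le_pow_left₀ (Phi_nonneg n hx) ih.le 2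
    simp only [Phi]
    linarith

lemma Phi_le_Phi_succ (k : ℕ) {x : ℝ} (hx : 0 ≤ x) : Phi k x ≤ Phi (k + 1) x := by
  induction k with
  | zero => exact le_add_of_nonneg_right (sq_nonneg x)
  | succ n ih => exact add_le_add le_rfl (pow_le_pow_left₀ (Phi_nonneg n hx) ih 2)

lemma monotone_Phi_apply {x : ℝ} (hx : 0 ≤ x) : Monotone fun k => Phi k x :=
  monotone_nat_of_le_succ fun k => Phi_le_Phi_succ k hx

lemma Phi_quarter_le_half (k : ℕ) : Phi k (1 / 4 : ℝ) ≤ 1 / 2 := by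
  induction k with
  | zero => norm_num [Phi]
  | succ n ih =>
    have h0 : 0 ≤ Phi n (1 / 4 : ℝ) := Phi_nonneg n (by norm_num)
    simp only [Phi]
    nlinarith

lemma le_quarter_of_Phi_le_one {L : ℝ} (hL : 0 ≤ L) (hbdd : ∀ k, Phi k L ≤ 1) : L ≤ 1 / 4 := by
  obtain ⟨A, hA⟩ : ∃ A, Tendsto (fun k => Phi k L) atTop (nhds A) :=
    ⟨_, tendsto_atTop_ciSup (monotone_Phi_apply hL) ⟨1, by rintro _ ⟨k, rfl⟩; exact hbdd k⟩⟩
  have hfix : A = L + A ^ 2 :=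
    tendsto_nhds_unique (hA.comp (tendsto_add_atTop_nat 1)) (tendsto_const_nhds.add (hA.pow 2))
  nlinarith [sq_nonneg (A - 1 / 2)]

lemma Phi_eq_sqrt_of_Phi_succ_eq_one {k : ℕ} {x : ℝ} (hx : 0 ≤ x) (h : Phi (k + 1) x = 1) :
    Phi k x = √(1 - x) := by
  have hsq : Phi k x ^ 2 = 1 - x := by simp only [Phi] at h; linarith
  rw [← hsq, sqrt_sq (Phi_nonneg k hx)]

lemma Pval_eq_of_Phi_succ_eq_one {k : ℕ} {x : ℝ} (hx : 0 ≤ x) (h : Phi (k + 1) x = 1) :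
    Pval k x = x ^ 2 * (1 - √(1 - x)) ^ 2 * (1 - x) := by
  rw [Pval, h, Phi_eq_sqrt_of_Phi_succ_eq_one hx h]

section Roots

variable {ξ : ℕ → ℝ} (hpos : ∀ k, 0 < ξ k) (hroot : ∀ k, Phi k (ξ k) = 1)
include hpos hroot

lemma antitone_of_Phi_eq_one : Antitone ξ := by
  refine antitone_nat_of_succ_le fun k => le_of_not_gt fun hlt => ?_
  have h1 := Phi_strictMonoOn (k + 1) (hpos k).le (hpos (k + 1)).le hlt
  have h2 := Phi_le_Phi_succ k (hpos k).le
  rw [hroot (k + 1)] at h1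
  rw [hroot k] at h2
  linarith

lemma quarter_lt_of_Phi_eq_one (k : ℕ) : 1 / 4 < ξ k := by
  refine lt_of_not_ge fun hle => ?_
  have := (Phi_strictMonoOn k).monotoneOn (hpos k).le (by norm_num : (0 : ℝ) ≤ 1 / 4) hle
  linarith [hroot k, Phi_quarter_le_half k]

lemma tendsto_quarter_of_Phi_eq_one : Tendsto ξ atTop (nhds (1 / 4)) := by
  have hbdd : BddBelow (Set.range ξ) :=
    ⟨1 / 4, by rintro _ ⟨k, rfl⟩; exact (quarter_lt_of_Phi_eq_one hpos hroot k).le⟩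
  have hge : 1 / 4 ≤ ⨅ k, ξ k := le_ciInf fun k => (quarter_lt_of_Phi_eq_one hpos hroot k).le
  have hle : ⨅ k, ξ k ≤ 1 / 4 := by
    refine le_quarter_of_Phi_le_one (by linarith) fun k => ?_
    rw [← hroot k]
    exact (Phi_strictMonoOn k).monotoneOn (by simp only [Set.mem_Ici]; linarith) (hpos k).le
      (ciInf_le hbdd k)
  rw [← le_antisymm hle hge]
  exact tendsto_atTop_ciInf (antitone_of_Phi_eq_one hpos hroot) hbdd

end Roots

lemma closed_form_at_quarter :
    (1 / 4 : ℝ) ^ 2 * (1 - √(1 - 1 / 4)) ^ 2 * (1 - 1 / 4) = 3 / 64 * (1 - √3 / 2) ^ 2 := by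
  have h : √(1 - 1 / 4 : ℝ) = √3 / 2 := by
    rw [show (1 - 1 / 4 : ℝ) = 3 / 2 ^ 2 by norm_num, sqrt_div' _ (by positivity),
      sqrt_sq (by norm_num)]
  rw [h]
  ring

lemma one_div_1200_lt : (1 / 1200 : ℝ) < 3 / 64 * (1 - √3 / 2) ^ 2 := by
  have h : √3 < 26 / 15 := (sqrt_lt' (by norm_num)).mpr (by norm_num)
  nlinarith [sq_sqrt (show (0 : ℝ) ≤ 3 by norm_num), sqrt_nonneg 3]

/-- For `ξ_k` the unique positive root of `Φ_k(x) = 1`: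
`P(ξ_k) = ξ_k²(1 − √(1 − ξ_k))²(1 − ξ_k)`, this quantity converges as `k → ∞` to
`p = (3/64)(1 − √3/2)²`, and `p > 1/1200`. -/
theorem Pval_at_xi (ξ : ℕ → ℝ) (hpos : ∀ k, 0 < ξ k) (hroot : ∀ k, Phi k (ξ k) = 1) :
    (∀ k : ℕ, Pval k (ξ (k + 1))
        = (ξ (k + 1)) ^ 2 * (1 - Real.sqrt (1 - ξ (k + 1))) ^ 2 * (1 - ξ (k + 1))) ∧
      Tendsto (fun k => Pval k (ξ (k + 1))) atTop
        (nhds ((3 / 64) * (1 - Real.sqrt 3 / 2) ^ 2)) ∧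
      (3 / 64 : ℝ) * (1 - Real.sqrt 3 / 2) ^ 2 > 1 / 1200 := by
  have hP : ∀ k : ℕ, Pval k (ξ (k + 1))
      = (ξ (k + 1)) ^ 2 * (1 - √(1 - ξ (k + 1))) ^ 2 * (1 - ξ (k + 1)) :=
    fun k => Pval_eq_of_Phi_succ_eq_one (hpos (k + 1)).le (hroot (k + 1))
  have hξ : Tendsto (fun k => ξ (k + 1)) atTop (nhds (1 / 4)) :=
    (tendsto_quarter_of_Phi_eq_one hpos hroot).comp (tendsto_add_atTop_nat 1)
  have hcont : Continuous fun x : ℝ => x ^ 2 * (1 - √(1 - x)) ^ 2 * (1 - x) := by fun_prop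
  refine ⟨hP, ?_, one_div_1200_lt⟩
  rw [← closed_form_at_quarter, funext hP]
  exact (hcont.tendsto _).comp hξ
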